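/- Let G be a finite abelian group and 1 ≤ k ≤ r with |G| ≥ C(r,k). Then for every integer ℓ ≥ 1, the total variation distance satisfies the exact identity SD(D^ℓ, D1) = Pr_{X∼D1}[c(X) > ℓ] · Pr_{X∼D0}[c(X) ≤ ℓ]. Moreover, if 1 + (C(r,k)−1)/|G| ≤ 3 and ℓ ≥ 4, then SD(D^ℓ, D1) ≤ Pr_{X∼D1}[c(X) > ℓ] ≤ Var_{X∼D1}(c(X))/(ℓ−3)²; in particular, if additionally k ≥ 3, 2k ≤ r, r ≥ 2^k·k², and |G| ≥ r^k, then SD(D^ℓ, D1) ≤ 2/(ℓ−3)². -/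

import Mathlib

/-!
Planting at `S` overwrites a single coordinate, so an instance `X` arises from exactly
`c(X)·|G|` pairs `(Y, S)`: `D1` is the uniform distribution reweighted by `c`,
`D1(X) = c(X)·|G| / (|G|^r·C(r,k))`. When `C(r,k) ≤ |G|`, every instance with a solution thus has
`D1`-mass at least `1/|G|^r`, so the hybrid exceeds `D1` exactly on `{c ≤ ℓ}`, by
`Pr_{D1}[c > ℓ]/|G|^r` at each point; this gives the identity for the statistical distance.

Moments of `c` under `D1` are moments one order higher under the uniform distribution, and these
count instances satisfying several conditions `∑_{j∈S} X j = 0`. Translating one coordinate that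
lies in `S` but in none of the previously imposed sets divides such a count by `|G|`. This gives
`E_{D1} c = 1 + (C(r,k)-1)/|G|`; for distinct `S, T` all but at most `2^k + 2` sets `U` give three
independent conditions, and with `k!·C(r,k) ≤ r^k ≤ |G|` this yields `Var_{D1} c ≤ 2`. Chebyshev's
inequality finishes.
-/

open Finset

/-- Number of k-SUM solutions of an instance `X ∈ G^r`: the number of `k`-element
subsets `S ⊆ {1,…,r}` with `∑_{i∈S} X i = 0`. -/
def numSol {G : Type} [AddCommGroup G] [DecidableEq G] (k : ℕ) {r : ℕ} (X : Fin r → G) : ℕ :=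
  (((univ : Finset (Fin r)).powersetCard k).filter (fun S => ∑ i ∈ S, X i = 0)).card

/-- Plant a solution at `S`: replace the entry at the smallest index `i` of `S` by
`-∑_{j∈S, j≠i} Y j`. -/
def plant {G : Type} [AddCommGroup G] {r : ℕ} (Y : Fin r → G) (S : Finset (Fin r)) :
    Fin r → G :=
  fun j =>
    if hS : S.Nonempty then
      if j = S.min' hS then -∑ i ∈ S.erase (S.min' hS), Y i else Y j
    else Y j

/-- The probability mass function of the planted distribution `D1` on `G^r`:
draw `Y` uniformly from `G^r` and an independent uniformly random `k`-element
subset `S`, and output `plant Y S`. -/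
noncomputable def D1pmf {G : Type} [AddCommGroup G] [Fintype G] [DecidableEq G] (k : ℕ)
    {r : ℕ} (X : Fin r → G) : ℝ :=
  (((univ : Finset ((Fin r → G) × Finset (Fin r))).filter
      (fun p => p.2.card = k ∧ plant p.1 p.2 = X)).card : ℝ)
    / ((Fintype.card G : ℝ) ^ r * (r.choose k : ℝ))

/-- The probability mass function of the uniform distribution `D0` on `G^r`. -/
noncomputable def D0pmf (G : Type) [Fintype G] (r : ℕ) (_X : Fin r → G) : ℝ :=
  1 / (Fintype.card G : ℝ) ^ r

/-- `Pr_{Y∼D1}[c(Y) > ℓ]`: the probability under the planted distribution that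
the number of solutions exceeds the real threshold `ℓ`. -/
noncomputable def D1probGt (G : Type) [AddCommGroup G] [Fintype G] [DecidableEq G]
    (k r : ℕ) (ℓ : ℝ) : ℝ :=
  ∑ X ∈ (univ : Finset (Fin r → G)).filter (fun X => ℓ < (numSol k X : ℝ)), D1pmf k X

/-- The probability mass function of the hybrid distribution `D^ℓ` on `G^r`:
draw `X` from `D1`; if `c(X) ≤ ℓ` output `X`, otherwise output an independent
uniform sample from `G^r`. -/
noncomputable def Dhybpmf (G : Type) [AddCommGroup G] [Fintype G] [DecidableEq G]
    (k r : ℕ) (ℓ : ℝ) (X : Fin r → G) : ℝ :=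
  (if (numSol k X : ℝ) ≤ ℓ then D1pmf k X else 0) + D1probGt G k r ℓ * D0pmf G r X

/-- Expectation of the number of k-SUM solutions under the planted distribution `D1`. -/
noncomputable def expD1 (G : Type) [AddCommGroup G] [Fintype G] [DecidableEq G]
    (k r : ℕ) : ℝ :=
  ∑ X : Fin r → G, D1pmf k X * (numSol k X : ℝ)

/-- Variance of the number of k-SUM solutions under the planted distribution `D1`. -/
noncomputable def varD1 (G : Type) [AddCommGroup G] [Fintype G] [DecidableEq G]
    (k r : ℕ) : ℝ :=
  ∑ X : Fin r → G, D1pmf k X * ((numSol k X : ℝ) - expD1 G k r) ^ 2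

/-- Total variation distance between two pmfs on a finite type. -/
noncomputable def SD {α : Type} [Fintype α] (P Q : α → ℝ) : ℝ :=
  (1 / 2) * ∑ X : α, |P X - Q X|

open scoped symmDiff Nat

lemma sum_mul_sub_sq_eq {α : Type*} (s : Finset α) (w f : α → ℝ) (hw : ∑ x ∈ s, w x = 1) :
    ∑ x ∈ s, w x * (f x - ∑ y ∈ s, w y * f y) ^ 2
      = ∑ x ∈ s, w x * f x ^ 2 - (∑ x ∈ s, w x * f x) ^ 2 := by
  set μ := ∑ y ∈ s, w y * f y
  have hexp (x : α) : w x * (f x - μ) ^ 2 = w x * f x ^ 2 - 2 * μ * (w x * f x) + μ ^ 2 * w x := by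
    ring
  simp_rw [hexp, sum_add_distrib, sum_sub_distrib, ← mul_sum, hw]
  ring

lemma SD_eq_sum_sub_of_sum_eq {α : Type} [Fintype α] {P Q : α → ℝ}
    (h : ∑ x, P x = ∑ x, Q x) (A : Finset α) (hA : ∀ x ∈ A, Q x ≤ P x)
    (hAc : ∀ x ∉ A, P x ≤ Q x) :
    SD P Q = ∑ x ∈ A, (P x - Q x) := by
  classical
  have habs := sum_add_sum_compl A fun x => |P x - Q x|
  have hzero : ∑ x ∈ A, (P x - Q x) + ∑ x ∈ Aᶜ, (P x - Q x) = 0 := by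
    rw [sum_add_sum_compl, sum_sub_distrib, h, sub_self]
  rw [sum_congr rfl fun x hx => abs_of_nonneg (sub_nonneg.2 (hA x hx)),
    sum_congr rfl fun x hx => abs_of_nonpos (sub_nonpos.2 (hAc x (mem_compl.1 hx))),
    sum_neg_distrib] at habs
  rw [SD, ← habs]
  linarith

lemma two_pow_add_two_le_two_mul_factorial {k : ℕ} (hk : 3 ≤ k) : 2 ^ k + 2 ≤ 2 * k ! := by
  induction k, hk using Nat.le_induction with
  | base => decide
  | succ n hn ih =>
    rw [pow_succ, Nat.factorial_succ]
    nlinarith [Nat.factorial_pos n]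

lemma choose_mul_two_pow_add_two_le {k r n : ℕ} (hk : 3 ≤ k) (hn : r ^ k ≤ n) :
    r.choose k * (2 ^ k + 2) ≤ 2 * n :=
  calc r.choose k * (2 ^ k + 2) ≤ r.choose k * (2 * k !) :=
        Nat.mul_le_mul_left _ (two_pow_add_two_le_two_mul_factorial hk)
    _ = 2 * (k ! * r.choose k) := by ring
    _ ≤ 2 * n := Nat.mul_le_mul_left 2
        ((Nat.descFactorial_eq_factorial_mul_choose r k ▸ Nat.descFactorial_le_pow r k).trans hn)

section KSubsets

variable {ι : Type*} {S T : Finset ι}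

lemma exists_mem_notMem_of_card_eq_of_ne (h : #S = #T) (hne : S ≠ T) : ∃ i ∈ S, i ∉ T := by
  by_contra! hsub
  exact hne (eq_of_subset_of_card_le hsub h.ge)

lemma nonempty_of_mem_powersetCard {k : ℕ} {s : Finset ι} (hk : 1 ≤ k)
    (hS : S ∈ powersetCard k s) : S.Nonempty :=
  card_pos.1 ((mem_powersetCard.1 hS).2 ▸ hk)

lemma card_Icc_symmDiff_union_le [DecidableEq ι] : #(Icc (S ∆ T) (S ∪ T)) ≤ 2 ^ #S := by
  rw [card_Icc_finset symmDiff_subset_union]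
  refine Nat.pow_le_pow_right two_pos ?_
  have hsub : S ∪ T ⊆ S ∪ S ∆ T := by
    intro x
    simp only [mem_union, mem_symmDiff]
    tauto
  have := (card_le_card hsub).trans (card_union_le S (S ∆ T))
  omega

lemma card_insert_insert_Icc_le [DecidableEq ι] :
    #(insert S (insert T (Icc (S ∆ T) (S ∪ T)))) ≤ 2 ^ #S + 2 :=
  calc _ ≤ #(Icc (S ∆ T) (S ∪ T)) + 1 + 1 :=
        (card_insert_le _ _).trans (Nat.add_le_add_right (card_insert_le _ _) 1)
    _ ≤ 2 ^ #S + 2 := by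
        have := card_Icc_symmDiff_union_le (S := S) (T := T)
        omega

end KSubsets

lemma sum_add_single {ι G : Type*} [DecidableEq ι] [AddCommGroup G] (S : Finset ι)
    (X : ι → G) (i : ι) (g : G) :
    ∑ j ∈ S, (X + Pi.single i g : ι → G) j = ∑ j ∈ S, X j + if i ∈ S then g else 0 := by
  simp only [Pi.add_apply, sum_add_distrib, sum_pi_single']

section ZeroSums

variable {ι G : Type*} [Fintype ι] [DecidableEq ι] [AddCommGroup G] [Fintype G] [DecidableEq G]

def solSet (S : Finset ι) : Finset (ι → G) :=
  univ.filter fun X => ∑ j ∈ S, X j = 0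

lemma mem_solSet {S : Finset ι} {X : ι → G} : X ∈ solSet S ↔ ∑ j ∈ S, X j = 0 := by
  simp [solSet]

lemma add_single_mem_solSet_iff {S : Finset ι} {i : ι} (hi : i ∉ S) (X : ι → G) (g : G) :
    X + Pi.single i g ∈ solSet S ↔ X ∈ solSet S := by
  rw [mem_solSet, mem_solSet, sum_add_single, if_neg hi, add_zero]

lemma card_inter_solSet_mul {S : Finset ι} {i : ι} (hi : i ∈ S) {s : Finset (ι → G)}
    (hs : ∀ X g, X + Pi.single i g ∈ s ↔ X ∈ s) :
    #(s ∩ solSet S) * Fintype.card G = #s := by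
  have fiber (g : G) : #{X ∈ s | ∑ j ∈ S, X j = g} = #(s ∩ solSet S) := by
    refine card_nbij' (· - Pi.single i g) (· + Pi.single i g) ?_ ?_ ?_ ?_
    · intro X hX
      rw [mem_coe, mem_filter] at hX
      simp only [mem_coe, mem_inter]
      rw [sub_eq_add_neg, ← Pi.single_neg, mem_solSet, sum_add_single,
        if_pos hi, hX.2, add_neg_cancel]
      exact ⟨(hs X (-g)).2 hX.1, rfl⟩
    · intro X hX
      rw [mem_coe, mem_inter, mem_solSet] at hX
      simp only [mem_coe, mem_filter]
      rw [sum_add_single, if_pos hi, hX.2, zero_add]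
      exact ⟨(hs X g).2 hX.1, rfl⟩
    · intro X _
      simp
    · intro X _
      simp
  rw [card_eq_sum_card_fiberwise (s := s) (f := fun X => ∑ j ∈ S, X j) (t := univ) (by simp)]
  simp only [fiber, sum_const, card_univ, smul_eq_mul, mul_comm]

lemma card_solSet_mul {S : Finset ι} {i : ι} (hi : i ∈ S) :
    #(solSet S : Finset (ι → G)) * Fintype.card G = Fintype.card G ^ Fintype.card ι := by
  simpa [card_univ] using card_inter_solSet_mul (s := (univ : Finset (ι → G))) hi (by simp)

lemma card_solSet_inter_mul {S T : Finset ι} {i j : ι} (hi : i ∈ S) (hjS : j ∉ S)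
    (hjT : j ∈ T) :
    #(solSet S ∩ solSet T : Finset (ι → G)) * Fintype.card G ^ 2
      = Fintype.card G ^ Fintype.card ι := by
  rw [sq, ← mul_assoc, card_inter_solSet_mul hjT (add_single_mem_solSet_iff hjS),
    card_solSet_mul hi]

lemma card_solSet_inter_inter_mul {S T U : Finset ι} {i j m : ι} (hi : i ∈ S)
    (hjS : j ∉ S) (hjT : j ∈ T) (hmS : m ∉ S) (hmT : m ∉ T) (hmU : m ∈ U) :
    #(solSet S ∩ solSet T ∩ solSet U : Finset (ι → G)) * Fintype.card G ^ 3
      = Fintype.card G ^ Fintype.card ι := by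
  rw [pow_succ', ← mul_assoc, card_inter_solSet_mul hmU, card_solSet_inter_mul hi hjS hjT]
  intro X g
  simp only [mem_inter, add_single_mem_solSet_iff hmS, add_single_mem_solSet_iff hmT]

lemma card_solSet_inter_inter_mul_of_notMem_Icc {k : ℕ} {S T U : Finset ι}
    (hS : #S = k) (hT : #T = k) (hU : #U = k) (hST : S ≠ T) (hUS : U ≠ S) (hUT : U ≠ T)
    (hUI : U ∉ Icc (S ∆ T) (S ∪ T)) :
    #(solSet S ∩ solSet T ∩ solSet U : Finset (ι → G)) * Fintype.card G ^ 3
      = Fintype.card G ^ Fintype.card ι := by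
  obtain ⟨i, hiS, -⟩ := exists_mem_notMem_of_card_eq_of_ne (hS.trans hT.symm) hST
  obtain ⟨j, hjT, hjS⟩ := exists_mem_notMem_of_card_eq_of_ne (hT.trans hS.symm) hST.symm
  obtain ⟨m, hmU, -⟩ := exists_mem_notMem_of_card_eq_of_ne (hU.trans hS.symm) hUS
  rw [mem_Icc, not_and_or] at hUI
  rcases hUI with hUI | hUI
  · obtain ⟨x, hx, hxU⟩ := not_subset.1 hUI
    rcases mem_symmDiff.1 hx with ⟨hxS, hxT⟩ | ⟨hxT, hxS⟩
    · obtain ⟨j', hj'T, hj'U⟩ := exists_mem_notMem_of_card_eq_of_ne (hT.trans hU.symm) hUT.symm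
      rw [show solSet S ∩ solSet T ∩ solSet U = (solSet U ∩ solSet T ∩ solSet S : Finset (ι → G))
        by ext; simp only [mem_inter]; tauto]
      exact card_solSet_inter_inter_mul hmU hj'U hj'T hxU hxT hxS
    · obtain ⟨i', hi'S, hi'U⟩ := exists_mem_notMem_of_card_eq_of_ne (hS.trans hU.symm) hUS.symm
      rw [show solSet S ∩ solSet T ∩ solSet U = (solSet U ∩ solSet S ∩ solSet T : Finset (ι → G))
        by ext; simp only [mem_inter]; tauto]
      exact card_solSet_inter_inter_mul hmU hi'U hi'S hxU hxS hxT
  · obtain ⟨x, hxU, hxST⟩ := not_subset.1 hUI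
    rw [mem_union, not_or] at hxST
    exact card_solSet_inter_inter_mul hiS hjS hjT hxST.1 hxST.2 hxU

variable {k : ℕ}

lemma sum_card_solSet_inter_mul (hk : 1 ≤ k) {S : Finset ι} (hS : S ∈ powersetCard k univ) :
    (∑ T ∈ powersetCard k univ, #(solSet S ∩ solSet T : Finset (ι → G))) * Fintype.card G ^ 2
      = Fintype.card G ^ (Fintype.card ι + 1)
        + ((Fintype.card ι).choose k - 1) * Fintype.card G ^ Fintype.card ι := by
  have hSk := (mem_powersetCard.1 hS).2
  obtain ⟨i, hi⟩ := nonempty_of_mem_powersetCard hk hS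
  have hoff : ∀ T ∈ (powersetCard k univ).erase S,
      #(solSet S ∩ solSet T : Finset (ι → G)) * Fintype.card G ^ 2
        = Fintype.card G ^ Fintype.card ι := by
    intro T hT
    obtain ⟨hTS, hTK⟩ := mem_erase.1 hT
    obtain ⟨j, hjT, hjS⟩ :=
      exists_mem_notMem_of_card_eq_of_ne ((mem_powersetCard.1 hTK).2.trans hSk.symm) hTS
    exact card_solSet_inter_mul hi hjS hjT
  rw [← add_sum_erase _ _ hS, add_mul, sum_mul, sum_congr rfl hoff, inter_self, sq,
    ← mul_assoc, card_solSet_mul hi, sum_const, card_erase_of_mem hS, card_powersetCard,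
    card_univ, smul_eq_mul, pow_succ]

lemma card_solSet_inter_inter_mul_le {S T : Finset ι} (hST' : #S = #T) (hST : S ≠ T)
    (U : Finset ι) :
    #(solSet S ∩ solSet T ∩ solSet U : Finset (ι → G)) * Fintype.card G ^ 3
      ≤ Fintype.card G ^ (Fintype.card ι + 1) := by
  obtain ⟨i, hiS, -⟩ := exists_mem_notMem_of_card_eq_of_ne hST' hST
  obtain ⟨j, hjT, hjS⟩ := exists_mem_notMem_of_card_eq_of_ne hST'.symm hST.symm
  calc #(solSet S ∩ solSet T ∩ solSet U : Finset (ι → G)) * Fintype.card G ^ 3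
      ≤ #(solSet S ∩ solSet T : Finset (ι → G)) * Fintype.card G ^ 2 * Fintype.card G := by
        rw [mul_assoc, ← pow_succ]
        exact Nat.mul_le_mul_right _ (card_le_card inter_subset_left)
    _ = Fintype.card G ^ (Fintype.card ι + 1) := by
        rw [card_solSet_inter_mul hiS hjS hjT, pow_succ]

lemma sum_card_solSet_inter_inter_mul_le_of_ne {S T : Finset ι} (hS : S ∈ powersetCard k univ)
    (hT : T ∈ powersetCard k univ) (hST : S ≠ T) :
    (∑ U ∈ powersetCard k univ, #(solSet S ∩ solSet T ∩ solSet U : Finset (ι → G)))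
        * Fintype.card G ^ 3
      ≤ (2 ^ k + 2) * Fintype.card G ^ (Fintype.card ι + 1)
        + (Fintype.card ι).choose k * Fintype.card G ^ Fintype.card ι := by
  set K := powersetCard k (univ : Finset ι)
  have hSk := (mem_powersetCard.1 hS).2
  have hTk := (mem_powersetCard.1 hT).2
  -- for `U ∉ B` the conditions of `S`, `T`, `U` are independent
  set B := insert S (insert T (Icc (S ∆ T) (S ∪ T)))
  have hgood : ∀ U ∈ K.filter (· ∉ B),
      #(solSet S ∩ solSet T ∩ solSet U : Finset (ι → G)) * Fintype.card G ^ 3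
        = Fintype.card G ^ Fintype.card ι := by
    intro U hU
    obtain ⟨hUK, hUB⟩ := mem_filter.1 hU
    simp only [B, mem_insert, not_or] at hUB
    exact card_solSet_inter_inter_mul_of_notMem_Icc hSk hTk (mem_powersetCard.1 hUK).2 hST
      hUB.1 hUB.2.1 hUB.2.2
  rw [sum_mul, ← sum_filter_add_sum_filter_not K (· ∈ B), sum_congr rfl hgood, sum_const,
    smul_eq_mul]
  gcongr
  · calc _ ≤ #(K.filter (· ∈ B)) • Fintype.card G ^ (Fintype.card ι + 1) :=
          sum_le_card_nsmul _ _ _ fun U _ =>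
            card_solSet_inter_inter_mul_le (hSk.trans hTk.symm) hST U
      _ ≤ (2 ^ k + 2) * Fintype.card G ^ (Fintype.card ι + 1) := by
        rw [smul_eq_mul]
        gcongr
        exact (card_le_card fun U hU => (mem_filter.1 hU).2).trans (hSk ▸ card_insert_insert_Icc_le)
  · calc #(K.filter (· ∉ B)) ≤ #K := card_le_card (filter_subset _ _)
      _ = (Fintype.card ι).choose k := by rw [card_powersetCard, card_univ]

lemma sum_sum_card_solSet_inter_inter_mul_le (hk : 1 ≤ k) {S : Finset ι}
    (hS : S ∈ powersetCard k univ) :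
    (∑ T ∈ powersetCard k univ, ∑ U ∈ powersetCard k univ,
        #(solSet S ∩ solSet T ∩ solSet U : Finset (ι → G))) * Fintype.card G ^ 3
      ≤ (Fintype.card G ^ (Fintype.card ι + 1)
          + ((Fintype.card ι).choose k - 1) * Fintype.card G ^ Fintype.card ι) * Fintype.card G
        + ((Fintype.card ι).choose k - 1) * ((2 ^ k + 2) * Fintype.card G ^ (Fintype.card ι + 1)
          + (Fintype.card ι).choose k * Fintype.card G ^ Fintype.card ι) := by
  set K := powersetCard k (univ : Finset ι)
  have hdiag : (∑ U ∈ K, #(solSet S ∩ solSet U : Finset (ι → G))) * Fintype.card G ^ 3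
      = (Fintype.card G ^ (Fintype.card ι + 1)
          + ((Fintype.card ι).choose k - 1) * Fintype.card G ^ Fintype.card ι)
        * Fintype.card G := by
    rw [pow_succ, ← mul_assoc, sum_card_solSet_inter_mul hk hS]
  have hoff : (∑ T ∈ K.erase S, ∑ U ∈ K,
        #(solSet S ∩ solSet T ∩ solSet U : Finset (ι → G))) * Fintype.card G ^ 3
      ≤ ((Fintype.card ι).choose k - 1) * ((2 ^ k + 2) * Fintype.card G ^ (Fintype.card ι + 1)
          + (Fintype.card ι).choose k * Fintype.card G ^ Fintype.card ι) := by
    rw [sum_mul]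
    calc _ ≤ #(K.erase S) • ((2 ^ k + 2) * Fintype.card G ^ (Fintype.card ι + 1)
          + (Fintype.card ι).choose k * Fintype.card G ^ Fintype.card ι) :=
          sum_le_card_nsmul _ _ _ fun T hT => sum_card_solSet_inter_inter_mul_le_of_ne hS
            (mem_of_mem_erase hT) (ne_of_mem_erase hT).symm
      _ = _ := by rw [card_erase_of_mem hS, card_powersetCard, card_univ, smul_eq_mul]
  rw [← add_sum_erase _ _ hS, add_mul, inter_self, hdiag]
  exact Nat.add_le_add_left hoff _

end ZeroSums

section NumSol

variable {G : Type} [AddCommGroup G] [Fintype G] [DecidableEq G] {k r : ℕ}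

lemma numSol_eq_sum (X : Fin r → G) :
    numSol k X = ∑ S ∈ powersetCard k univ, if X ∈ solSet S then 1 else 0 := by
  simp only [numSol, card_filter, mem_solSet]

lemma numSol_sq_eq_sum (X : Fin r → G) :
    numSol k X ^ 2 = ∑ S ∈ powersetCard k univ, ∑ T ∈ powersetCard k univ,
      if X ∈ solSet S ∩ solSet T then 1 else 0 := by
  simp only [sq, numSol_eq_sum, sum_mul_sum, ite_zero_mul_ite_zero, mul_one, mem_inter]

lemma numSol_pow_three_eq_sum (X : Fin r → G) :
    numSol k X ^ 3 = ∑ S ∈ powersetCard k univ, ∑ T ∈ powersetCard k univ,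
      ∑ U ∈ powersetCard k univ, if X ∈ solSet S ∩ solSet T ∩ solSet U then 1 else 0 := by
  rw [pow_succ, numSol_sq_eq_sum, numSol_eq_sum, sum_mul]
  refine sum_congr rfl fun S _ => ?_
  rw [sum_mul]
  refine sum_congr rfl fun T _ => ?_
  simp only [mul_sum, ite_zero_mul_ite_zero, mul_one, mem_inter]

lemma sum_numSol :
    ∑ X : Fin r → G, numSol k X = ∑ S ∈ powersetCard k univ, #(solSet S : Finset (Fin r → G)) := by
  simp_rw [numSol_eq_sum]
  rw [sum_comm]
  simp only [sum_boole, filter_mem_eq_inter, univ_inter, Nat.cast_id]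

lemma sum_numSol_sq :
    ∑ X : Fin r → G, numSol k X ^ 2
      = ∑ S ∈ powersetCard k univ, ∑ T ∈ powersetCard k univ,
          #(solSet S ∩ solSet T : Finset (Fin r → G)) := by
  simp_rw [numSol_sq_eq_sum]
  rw [sum_comm]
  refine sum_congr rfl fun S _ => ?_
  rw [sum_comm]
  simp only [sum_boole, filter_mem_eq_inter, univ_inter, Nat.cast_id]

lemma sum_numSol_pow_three :
    ∑ X : Fin r → G, numSol k X ^ 3
      = ∑ S ∈ powersetCard k univ, ∑ T ∈ powersetCard k univ, ∑ U ∈ powersetCard k univ,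
          #(solSet S ∩ solSet T ∩ solSet U : Finset (Fin r → G)) := by
  simp_rw [numSol_pow_three_eq_sum]
  rw [sum_comm]
  refine sum_congr rfl fun S _ => ?_
  rw [sum_comm]
  refine sum_congr rfl fun T _ => ?_
  rw [sum_comm]
  simp only [sum_boole, filter_mem_eq_inter, univ_inter, Nat.cast_id]

lemma sum_numSol_mul (hk : 1 ≤ k) :
    (∑ X : Fin r → G, numSol k X) * Fintype.card G = r.choose k * Fintype.card G ^ r := by
  rw [sum_numSol, sum_mul, sum_congr rfl fun S hS => ?_, sum_const, card_powersetCard,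
    card_univ, Fintype.card_fin, smul_eq_mul]
  obtain ⟨i, hi⟩ := nonempty_of_mem_powersetCard hk hS
  rw [card_solSet_mul hi, Fintype.card_fin]

lemma sum_numSol_sq_mul (hk : 1 ≤ k) :
    (∑ X : Fin r → G, numSol k X ^ 2) * Fintype.card G ^ 2
      = r.choose k * (Fintype.card G ^ (r + 1) + (r.choose k - 1) * Fintype.card G ^ r) := by
  rw [sum_numSol_sq, sum_mul, sum_congr rfl fun S hS => sum_card_solSet_inter_mul hk hS,
    sum_const, card_powersetCard, card_univ, smul_eq_mul]
  simp only [Fintype.card_fin]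

lemma sum_numSol_pow_three_mul_le (hk : 1 ≤ k) :
    (∑ X : Fin r → G, numSol k X ^ 3) * Fintype.card G ^ 3
      ≤ r.choose k * ((Fintype.card G ^ (r + 1) + (r.choose k - 1) * Fintype.card G ^ r)
          * Fintype.card G + (r.choose k - 1) * ((2 ^ k + 2) * Fintype.card G ^ (r + 1)
            + r.choose k * Fintype.card G ^ r)) := by
  rw [sum_numSol_pow_three, sum_mul]
  calc _ ≤ #(powersetCard k (univ : Finset (Fin r))) • _ :=
        sum_le_card_nsmul _ _ _ fun S hS => sum_sum_card_solSet_inter_inter_mul_le hk hS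
    _ = _ := by simp only [card_powersetCard, card_univ, Fintype.card_fin, smul_eq_mul]

end NumSol

section Planted

variable {G : Type} [AddCommGroup G] {k r : ℕ}

lemma plant_eq_update {S : Finset (Fin r)} (hS : S.Nonempty) (Y : Fin r → G) :
    plant Y S = Function.update Y (S.min' hS) (-∑ j ∈ S.erase (S.min' hS), Y j) := by
  funext j
  simp [plant, hS, Function.update_apply]

variable [Fintype G] [DecidableEq G]

lemma plant_eq_iff {S : Finset (Fin r)} (hS : S.Nonempty) {X Y : Fin r → G} :
    plant Y S = X ↔ X ∈ solSet S ∧ ∃ g, Function.update X (S.min' hS) g = Y := by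
  have hi := S.min'_mem hS
  rw [plant_eq_update hS, mem_solSet]
  generalize S.min' hS = i at hi ⊢
  rw [← add_sum_erase S X hi]
  constructor
  · rintro rfl
    refine ⟨?_, Y i, ?_⟩
    · simp [sum_update_of_notMem (notMem_erase i S)]
    · rw [Function.update_idem, Function.update_eq_self]
  · rintro ⟨hX, g, rfl⟩
    rw [Function.update_idem, sum_update_of_notMem (notMem_erase i S),
      ← eq_neg_of_add_eq_zero_left hX, Function.update_eq_self]

lemma card_plant_eq {S : Finset (Fin r)} (hS : S.Nonempty) (X : Fin r → G) :
    #{Y | plant Y S = X} = if X ∈ solSet S then Fintype.card G else 0 := by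
  split_ifs with hX
  · rw [← card_univ, ← card_image_of_injective univ (Function.update_injective X (S.min' hS))]
    congr 1
    ext Y
    simp [plant_eq_iff hS, hX]
  · simp [plant_eq_iff hS, hX]

lemma card_plant_fiber (hk : 1 ≤ k) (X : Fin r → G) :
    #{p : (Fin r → G) × Finset (Fin r) | #p.2 = k ∧ plant p.1 p.2 = X}
      = numSol k X * Fintype.card G := by
  rw [card_filter, Fintype.sum_prod_type, sum_comm]
  rw [sum_congr rfl fun S _ => (?_ : _ = if #S = k then #{Y | plant Y S = X} else 0),
    ← sum_filter, show ({S | #S = k} : Finset (Finset (Fin r))) = powersetCard k univ by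
    ext; simp [mem_powersetCard]]
  rw [numSol_eq_sum, sum_mul]
  refine sum_congr rfl fun S hS => ?_
  · rw [card_plant_eq (nonempty_of_mem_powersetCard hk hS), ite_mul, one_mul, zero_mul]
  · split_ifs with hS <;> simp [hS]

end Planted

lemma D0pmf_nonneg {G : Type} [Fintype G] {r : ℕ} (X : Fin r → G) : 0 ≤ D0pmf G r X := by
  unfold D0pmf
  positivity

lemma sum_D0pmf {G : Type} [Fintype G] [Nonempty G] {r : ℕ} : ∑ X : Fin r → G, D0pmf G r X = 1 := by
  have hq : (0 : ℝ) < Fintype.card G := by exact_mod_cast Fintype.card_pos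
  simp [D0pmf, card_univ, Fintype.card_fin, hq.ne']

section Distributions

variable {G : Type} [AddCommGroup G] [Fintype G] [DecidableEq G] {k r : ℕ}

lemma D1pmf_eq (hk : 1 ≤ k) (X : Fin r → G) :
    D1pmf k X = numSol k X * Fintype.card G / (Fintype.card G ^ r * r.choose k) := by
  rw [D1pmf, card_plant_fiber hk, Nat.cast_mul]

lemma D1pmf_nonneg (X : Fin r → G) : 0 ≤ D1pmf k X := by
  unfold D1pmf
  positivity

lemma sum_D1pmf_mul (hk : 1 ≤ k) (f : (Fin r → G) → ℝ) :
    ∑ X, D1pmf k X * f X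
      = (∑ X, numSol k X * f X) * Fintype.card G / (Fintype.card G ^ r * r.choose k) := by
  simp_rw [D1pmf_eq hk]
  rw [sum_mul, sum_div]
  exact sum_congr rfl fun X _ => by ring

lemma sum_D1pmf (hk : 1 ≤ k) (hkr : k ≤ r) : ∑ X : Fin r → G, D1pmf k X = 1 := by
  have hq : (0 : ℝ) < Fintype.card G := by exact_mod_cast Fintype.card_pos
  have hC : (0 : ℝ) < r.choose k := by exact_mod_cast Nat.choose_pos hkr
  have h := congrArg (Nat.cast : ℕ → ℝ) (sum_numSol_mul (G := G) (r := r) hk)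
  push_cast at h
  have := sum_D1pmf_mul (G := G) (r := r) hk fun _ => 1
  simp only [mul_one] at this
  rw [this, h, mul_comm, div_self (by positivity)]

lemma expD1_eq (hk : 1 ≤ k) (hkr : k ≤ r) :
    expD1 G k r = 1 + ((r.choose k : ℝ) - 1) / Fintype.card G := by
  have hq : (0 : ℝ) < Fintype.card G := by exact_mod_cast Fintype.card_pos
  have hC : (0 : ℝ) < r.choose k := by exact_mod_cast Nat.choose_pos hkr
  have h := congrArg (Nat.cast : ℕ → ℝ) (sum_numSol_sq_mul (G := G) (r := r) hk)
  push_cast [Nat.cast_sub (Nat.choose_pos hkr)] at h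
  rw [expD1, sum_D1pmf_mul hk]
  simp_rw [← sq]
  field_simp
  linear_combination h

lemma varD1_eq (hk : 1 ≤ k) (hkr : k ≤ r) :
    varD1 G k r = ∑ X : Fin r → G, D1pmf k X * (numSol k X : ℝ) ^ 2 - expD1 G k r ^ 2 :=
  sum_mul_sub_sq_eq _ _ _ (sum_D1pmf hk hkr)

lemma varD1_le_two (hk : 3 ≤ k) (hkr : k ≤ r) (hG : r ^ k ≤ Fintype.card G) :
    varD1 G k r ≤ 2 := by
  have hk1 : 1 ≤ k := by omega
  have hC1 : 1 ≤ r.choose k := Nat.choose_pos hkr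
  have hq : (0 : ℝ) < Fintype.card G := by exact_mod_cast Fintype.card_pos
  have hCq : (r.choose k : ℝ) * (2 ^ k + 2) ≤ 2 * Fintype.card G := by
    exact_mod_cast choose_mul_two_pow_add_two_le hk hG
  have hM : (∑ X : Fin r → G, (numSol k X : ℝ) ^ 3) * (Fintype.card G : ℝ) ^ 3
      ≤ r.choose k * (((Fintype.card G : ℝ) ^ (r + 1)
          + (r.choose k - 1) * (Fintype.card G : ℝ) ^ r) * Fintype.card G
        + (r.choose k - 1) * ((2 ^ k + 2) * (Fintype.card G : ℝ) ^ (r + 1)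
          + r.choose k * (Fintype.card G : ℝ) ^ r)) := by
    have := Nat.cast_le (α := ℝ).2 (sum_numSol_pow_three_mul_le (G := G) (r := r) hk1)
    push_cast [Nat.cast_sub hC1] at this
    exact this
  have hq1 : (1 : ℝ) ≤ Fintype.card G := by exact_mod_cast Fintype.card_pos
  have hC1' : (1 : ℝ) ≤ r.choose k := by exact_mod_cast hC1
  rw [varD1_eq hk1 hkr, expD1_eq hk1 hkr, sum_D1pmf_mul hk1]
  simp_rw [← pow_succ']
  generalize (∑ X : Fin r → G, (numSol k X : ℝ) ^ 3) = M at hM ⊢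
  generalize (Fintype.card G : ℝ) = q at hq hq1 hCq hM ⊢
  generalize (r.choose k : ℝ) = C at hC1' hCq hM ⊢
  have hE2 : M * q / (q ^ r * C) * q ^ 2 ≤ q ^ 2 + (C - 1) * q + (C - 1) * ((2 ^ k + 2) * q + C) := by
    rw [div_mul_eq_mul_div, div_le_iff₀ (by positivity)]
    calc M * q * q ^ 2 = M * q ^ 3 := by ring
      _ ≤ _ := hM
      _ = _ := by ring
  have hsq : (1 + (C - 1) / q) ^ 2 * q ^ 2 = (q + C - 1) ^ 2 := by
    field_simp
    ring
  rw [sub_le_iff_le_add, ← mul_le_mul_iff_of_pos_right (pow_pos hq 2), add_mul, hsq]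
  nlinarith [mul_le_mul_of_nonneg_right hCq hq.le, mul_nonneg (sub_nonneg.2 hC1') (sub_nonneg.2 hq1)]

lemma D1probGt_mul_sq_le_varD1 {m ℓ : ℝ} (hE : expD1 G k r ≤ m) (hmℓ : m ≤ ℓ) :
    D1probGt G k r ℓ * (ℓ - m) ^ 2 ≤ varD1 G k r := by
  rw [D1probGt, sum_mul, varD1]
  calc _ ≤ ∑ X ∈ univ.filter (fun X : Fin r → G => ℓ < numSol k X),
        D1pmf k X * ((numSol k X : ℝ) - expD1 G k r) ^ 2 := by
        refine sum_le_sum fun X hX => mul_le_mul_of_nonneg_left ?_ (D1pmf_nonneg X)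
        have := (mem_filter.1 hX).2
        exact pow_le_pow_left₀ (by linarith) (by linarith) 2
    _ ≤ _ := sum_le_sum_of_subset_of_nonneg (filter_subset _ _) fun X _ _ =>
        mul_nonneg (D1pmf_nonneg X) (sq_nonneg _)

lemma D1probGt_nonneg (ℓ : ℝ) : 0 ≤ D1probGt G k r ℓ :=
  sum_nonneg fun X _ => D1pmf_nonneg X

lemma D1probGt_le_one (hk : 1 ≤ k) (hkr : k ≤ r) (ℓ : ℝ) : D1probGt G k r ℓ ≤ 1 :=
  (sum_D1pmf (G := G) hk hkr) ▸
    sum_le_sum_of_subset_of_nonneg (filter_subset _ _) fun X _ _ => D1pmf_nonneg X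

lemma sum_Dhybpmf (ℓ : ℝ) : ∑ X, Dhybpmf G k r ℓ X = ∑ X : Fin r → G, D1pmf k X := by
  simp only [Dhybpmf, sum_add_distrib, ← mul_sum, sum_D0pmf, mul_one, D1probGt, ← sum_filter]
  rw [← sum_filter_add_sum_filter_not univ fun X : Fin r → G => (numSol k X : ℝ) ≤ ℓ]
  simp only [not_le]

lemma D0pmf_le_D1pmf (hk : 1 ≤ k) (hkr : k ≤ r) (hG : r.choose k ≤ Fintype.card G)
    {X : Fin r → G} (hX : 1 ≤ numSol k X) : D0pmf G r X ≤ D1pmf k X := by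
  have hC : (0 : ℝ) < r.choose k := by exact_mod_cast Nat.choose_pos hkr
  have hq : (0 : ℝ) < Fintype.card G := by exact_mod_cast Fintype.card_pos
  have hG' : (r.choose k : ℝ) ≤ Fintype.card G := by exact_mod_cast hG
  have hX' : (1 : ℝ) ≤ numSol k X := by exact_mod_cast hX
  rw [D0pmf, D1pmf_eq hk, div_le_div_iff₀ (by positivity) (by positivity)]
  have : (r.choose k : ℝ) ≤ numSol k X * Fintype.card G := by nlinarith
  nlinarith [mul_le_mul_of_nonneg_left this (pow_pos hq r).le]

lemma SD_Dhybpmf_eq (hk : 1 ≤ k) (hkr : k ≤ r) (hG : r.choose k ≤ Fintype.card G) {ℓ : ℝ}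
    (hℓ : 0 ≤ ℓ) :
    SD (Dhybpmf G k r ℓ) (fun X : Fin r → G => D1pmf k X)
      = D1probGt G k r ℓ * (#{X : Fin r → G | (numSol k X : ℝ) ≤ ℓ} / Fintype.card G ^ r) := by
  rw [SD_eq_sum_sub_of_sum_eq (sum_Dhybpmf ℓ) {X | (numSol k X : ℝ) ≤ ℓ}]
  · rw [sum_congr rfl fun X hX => by rw [Dhybpmf, if_pos (mem_filter.1 hX).2, add_sub_cancel_left],
      ← mul_sum]
    simp only [D0pmf, sum_const, nsmul_eq_mul]
    ring
  · intro X hX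
    rw [Dhybpmf, if_pos (mem_filter.1 hX).2]
    exact le_add_of_nonneg_right (mul_nonneg (D1probGt_nonneg ℓ) (D0pmf_nonneg X))
  · intro X hX
    have hlt : ℓ < numSol k X := lt_of_not_ge fun h => hX (mem_filter.2 ⟨mem_univ X, h⟩)
    have h1 : 1 ≤ numSol k X := by exact_mod_cast (hℓ.trans_lt hlt)
    rw [Dhybpmf, if_neg hlt.not_ge, zero_add]
    calc D1probGt G k r ℓ * D0pmf G r X ≤ 1 * D0pmf G r X :=
          mul_le_mul_of_nonneg_right (D1probGt_le_one hk hkr ℓ) (D0pmf_nonneg X)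
      _ ≤ D1pmf k X := (one_mul _).trans_le (D0pmf_le_D1pmf hk hkr hG h1)

end Distributions

theorem SD_Dhyb_D1_general
    (G : Type) [AddCommGroup G] [Fintype G] [DecidableEq G]
    (k r : ℕ) (hk : 1 ≤ k) (hkr : k ≤ r)
    (hG : r.choose k ≤ Fintype.card G) (ℓ : ℕ) :
    (SD (Dhybpmf G k r (ℓ : ℝ)) (fun X : Fin r → G => D1pmf k X)
        = D1probGt G k r (ℓ : ℝ)
            * ((((univ : Finset (Fin r → G)).filter (fun X => numSol k X ≤ ℓ)).card : ℝ)
                / (Fintype.card G : ℝ) ^ r))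
    ∧ (1 + ((r.choose k : ℝ) - 1) / (Fintype.card G : ℝ) ≤ 3 → 4 ≤ ℓ →
        (SD (Dhybpmf G k r (ℓ : ℝ)) (fun X : Fin r → G => D1pmf k X)
            ≤ D1probGt G k r (ℓ : ℝ)
        ∧ D1probGt G k r (ℓ : ℝ) ≤ varD1 G k r / ((ℓ : ℝ) - 3) ^ 2
        ∧ (3 ≤ k → 2 * k ≤ r → 2 ^ k * k ^ 2 ≤ r → r ^ k ≤ Fintype.card G →
            SD (Dhybpmf G k r (ℓ : ℝ)) (fun X : Fin r → G => D1pmf k X)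
              ≤ 2 / ((ℓ : ℝ) - 3) ^ 2))) := by
  have hSD := SD_Dhybpmf_eq hk hkr hG (Nat.cast_nonneg (α := ℝ) ℓ)
  simp only [Nat.cast_le] at hSD
  refine ⟨hSD, fun hE hℓ => ?_⟩
  have hℓ3 : (0 : ℝ) < (ℓ : ℝ) - 3 := by
    have : (4 : ℝ) ≤ ℓ := by exact_mod_cast hℓ
    linarith
  have hSD_le : SD (Dhybpmf G k r ℓ) (fun X : Fin r → G => D1pmf k X) ≤ D1probGt G k r ℓ := by
    rw [hSD]
    refine mul_le_of_le_one_right (D1probGt_nonneg _) (div_le_one_of_le₀ ?_ (by positivity))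
    exact_mod_cast (card_le_univ _).trans_eq (by simp)
  have hCheb : D1probGt G k r ℓ ≤ varD1 G k r / ((ℓ : ℝ) - 3) ^ 2 :=
    (le_div_iff₀ (by positivity)).2
      (D1probGt_mul_sq_le_varD1 ((expD1_eq hk hkr).trans_le hE) (by linarith))
  refine ⟨hSD_le, hCheb, fun hk3 _ _ hrG => ?_⟩
  calc _ ≤ varD1 G k r / ((ℓ : ℝ) - 3) ^ 2 := hSD_le.trans hCheb
    _ ≤ 2 / ((ℓ : ℝ) - 3) ^ 2 := by gcongr; exact varD1_le_two hk3 hkr hrG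

/-- **Statistical distance between `D^ℓ` and `D1`.**
For an integer `ℓ ≥ 1` and `|G| ≥ C(r,k)`:
`SD(D^ℓ, D1) = Pr_{X∼D1}[c(X) > ℓ]·Pr_{X∼D0}[c(X) ≤ ℓ]` exactly. Moreover, if
`1 + (C(r,k)−1)/|G| ≤ 3` and `ℓ ≥ 4`, then
`SD(D^ℓ, D1) ≤ Pr_{X∼D1}[c(X) > ℓ] ≤ Var_{X∼D1}(c(X))/(ℓ−3)²`; in particular,
if additionally `k ≥ 3`, `2k ≤ r`, `r ≥ 2^k·k²`, and `|G| ≥ r^k`, then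
`SD(D^ℓ, D1) ≤ 2/(ℓ−3)²`. -/
theorem SD_Dhyb_D1
    (G : Type) [AddCommGroup G] [Fintype G] [DecidableEq G]
    (k r : ℕ) (hk : 1 ≤ k) (hkr : k ≤ r)
    (hG : r.choose k ≤ Fintype.card G) (ℓ : ℕ) (hℓ : 1 ≤ ℓ) :
    (SD (Dhybpmf G k r (ℓ : ℝ)) (fun X : Fin r → G => D1pmf k X)
        = D1probGt G k r (ℓ : ℝ)
            * ((((univ : Finset (Fin r → G)).filter (fun X => numSol k X ≤ ℓ)).card : ℝ)
                / (Fintype.card G : ℝ) ^ r))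
    ∧ (1 + ((r.choose k : ℝ) - 1) / (Fintype.card G : ℝ) ≤ 3 → 4 ≤ ℓ →
        (SD (Dhybpmf G k r (ℓ : ℝ)) (fun X : Fin r → G => D1pmf k X)
            ≤ D1probGt G k r (ℓ : ℝ)
        ∧ D1probGt G k r (ℓ : ℝ) ≤ varD1 G k r / ((ℓ : ℝ) - 3) ^ 2
        ∧ (3 ≤ k → 2 * k ≤ r → 2 ^ k * k ^ 2 ≤ r → r ^ k ≤ Fintype.card G →
            SD (Dhybpmf G k r (ℓ : ℝ)) (fun X : Fin r → G => D1pmf k X)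
              ≤ 2 / ((ℓ : ℝ) - 3) ^ 2))) :=
  SD_Dhyb_D1_general G k r hk hkr hG ℓ
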